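/- Let A be a commutative ring, I ⊆ A a finitely generated ideal, and suppose A is derived I-complete as a module over itself. Let M be a derived I-complete A-module. Then the following are equivalent: (1) M is finitely generated outside I, i.e. for every t ∈ I the localization M[1/t] is a finitely generated A[1/t]-module; (2) there exists r ≥ 1 such that M is ≤I^r-finitely generated; (3) there exists r ≥ 1 such that for all n ≥ 1, M/I^n M is ≤I^r-finitely generated. Moreover, for each fixed r ≥ 1, condition (2) holds with exponent r if and only if condition (3) holds with exponent r. -/

import Mathlib

/-!
Derived `x`-completeness passes to quotients by finitely generated submodules (as `A` is derived
complete), to submodules whose quotient has bounded `x`-torsion, and it forces a module with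
`M = I M` to vanish (derived Nakayama, by induction on the generators of `I`).

(2) ⇒ (3) is formal. For (3) ⇒ (2) with `n = r + 1`, lift the finitely generated submodule of
`M / I^{r+1} M` to a finitely generated `N ⊆ M` with `I^r M ⊆ N + I^{r+1} M`; then the derived
complete module `I^r (M/N)` equals `I` times itself, hence vanishes, i.e. `I^r M ⊆ N`.
For (1) ⇒ (2), finitely many elements generate `M[1/t]` for each generator `t` of `I`; the
quotient of `M` by their span is derived complete and `I`-power torsion, and a derived
`x`-complete `x`-power torsion module has bounded `x`-torsion, so a power of `I` kills it.
(2) ⇒ (1) holds because `t^r` is invertible in `A[1/t]`.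
-/

universe u v

def derivedCompletionPhi {A : Type u} [CommRing A] (x : A) (M : Type v) [AddCommGroup M]
    [Module A M] : (ℕ → M) → (ℕ → M) :=
  fun m n => m n - x • m (n + 1)

def IsDerivedComplete {A : Type u} [CommRing A] (x : A) (M : Type v) [AddCommGroup M]
    [Module A M] : Prop :=
  Function.Bijective (derivedCompletionPhi x M)

def IsLeqFinitelyGenerated {A : Type u} [CommRing A] (J : Ideal A) (M : Type v)
    [AddCommGroup M] [Module A M] : Prop :=
  ∀ a ∈ J, ∃ (F : Type v) (_ : AddCommGroup F) (_ : Module A F), Module.Finite A F ∧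
    ∃ (f : M →ₗ[A] F) (g : F →ₗ[A] M), g ∘ₗ f = a • (LinearMap.id : M →ₗ[A] M)

section Submodule

variable {A : Type u} [CommRing A] {X : Type v} [AddCommGroup X] [Module A X]
  {Y : Type*} [AddCommGroup Y] [Module A Y]

theorem map_ideal_smul_top_of_surjective (I : Ideal A) {f : X →ₗ[A] Y}
    (hf : Function.Surjective f) : (I • ⊤ : Submodule A X).map f = I • ⊤ := by
  rw [Submodule.map_smul'', Submodule.map_top, LinearMap.range_eq_top_of_surjective f hf]

theorem smul_top_le_iff_smul_top_quotient_eq_bot (J : Ideal A) (N : Submodule A X) :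
    J • (⊤ : Submodule A X) ≤ N ↔ J • (⊤ : Submodule A (X ⧸ N)) = ⊥ := by
  rw [← map_ideal_smul_top_of_surjective J N.mkQ_surjective, ← le_bot_iff,
    Submodule.map_le_iff_le_comap, Submodule.comap_bot, Submodule.ker_mkQ]

theorem Submodule.exists_fg_map_eq_of_surjective {f : X →ₗ[A] Y} (hf : Function.Surjective f)
    {P : Submodule A Y} (hP : P.FG) : ∃ N : Submodule A X, N.FG ∧ N.map f = P := by
  classical
  obtain ⟨s, rfl⟩ := hP
  refine ⟨Submodule.span A (s.image (Function.surjInv hf)), ⟨_, rfl⟩, ?_⟩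
  rw [Submodule.map_span, Finset.coe_image, Set.image_image]
  simp [Function.surjInv_eq hf]

end Submodule

section DerivedComplete

variable {A : Type u} [CommRing A] {x : A} {X : Type v} [AddCommGroup X] [Module A X]
  {Y : Type*} [AddCommGroup Y] [Module A Y]

variable (x X) in
def derivedCompletionPhiₗ : Module.End A (ℕ → X) :=
  1 - x • LinearMap.funLeft A X Nat.succ

variable (x X) in
theorem coe_derivedCompletionPhiₗ : ⇑(derivedCompletionPhiₗ x X) = derivedCompletionPhi x X :=
  rfl

theorem derivedCompletionPhi_comp (ψ : X →ₗ[A] Y) (m : ℕ → X) :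
    derivedCompletionPhi x Y (ψ ∘ m) = ψ ∘ derivedCompletionPhi x X m := by
  funext n
  simp [derivedCompletionPhi]

theorem derivedCompletionPhi_surjective_of_surjective {ψ : X →ₗ[A] Y}
    (hψ : Function.Surjective ψ) (hX : Function.Surjective (derivedCompletionPhi x X)) :
    Function.Surjective (derivedCompletionPhi x Y) := by
  intro c
  obtain ⟨c', rfl⟩ := hψ.comp_left c
  obtain ⟨y, rfl⟩ := hX c'
  exact ⟨ψ ∘ y, derivedCompletionPhi_comp ψ y⟩

theorem isDerivedComplete_of_pow_smul_eq_zero (c : ℕ) (h : ∀ m : X, x ^ c • m = 0) :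
    IsDerivedComplete x X := by
  have hnil : IsNilpotent (x • LinearMap.funLeft A X Nat.succ) :=
    ⟨c, by ext m n; simp [smul_pow, h]⟩
  exact (Module.End.isUnit_iff _).mp hnil.isUnit_one_sub

theorem IsDerivedComplete.pi {ι : Type*} (hX : IsDerivedComplete x X) :
    IsDerivedComplete x (ι → X) := by
  refine ⟨fun m m' h => ?_, fun c => ?_⟩
  · funext n i
    have : (fun n => m n i) = fun n => m' n i :=
      hX.1 (funext fun n => congrFun (congrFun h n) i)
    exact congrFun this n
  · choose y hy using fun i => hX.2 (fun n => c n i)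
    exact ⟨fun n i => y i n, funext fun n => funext fun i => congrFun (hy i) n⟩

theorem IsDerivedComplete.quotient (hX : IsDerivedComplete x X) {N : Submodule A X}
    (hN : Function.Surjective (derivedCompletionPhi x N)) :
    IsDerivedComplete x (X ⧸ N) := by
  refine ⟨?_, derivedCompletionPhi_surjective_of_surjective N.mkQ_surjective hX.2⟩
  rw [← coe_derivedCompletionPhiₗ, injective_iff_map_eq_zero]
  intro q hq
  obtain ⟨m, rfl⟩ := N.mkQ_surjective.comp_left q
  rw [coe_derivedCompletionPhiₗ, derivedCompletionPhi_comp] at hq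
  have hmem : ∀ n, derivedCompletionPhi x X m n ∈ N := fun n => by
    rw [← Submodule.ker_mkQ N, LinearMap.mem_ker]
    exact congrFun hq n
  obtain ⟨z, hz⟩ := hN fun n => ⟨_, hmem n⟩
  have hmz : m = N.subtype ∘ z := hX.1 <| by
    rw [derivedCompletionPhi_comp, hz]
    rfl
  funext n
  simp [hmz]

theorem IsDerivedComplete.submodule {N : Submodule A X} (hX : IsDerivedComplete x X)
    (hq : Function.Injective (derivedCompletionPhi x (X ⧸ N))) :
    IsDerivedComplete x N := by
  refine ⟨fun m m' h => ?_, fun w => ?_⟩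
  · have : N.subtype ∘ m = N.subtype ∘ m' := hX.1 <| by
      rw [derivedCompletionPhi_comp, derivedCompletionPhi_comp, h]
    exact (Function.Injective.comp_left N.injective_subtype) this
  · obtain ⟨y, hy⟩ := hX.2 (N.subtype ∘ w)
    have hy0 : N.mkQ ∘ y = 0 := hq <| by
      rw [derivedCompletionPhi_comp, hy, ← coe_derivedCompletionPhiₗ, map_zero]
      funext n
      simp
    have hyN : ∀ n, y n ∈ N := fun n => by
      simpa using congrFun hy0 n
    refine ⟨fun n => ⟨y n, hyN n⟩, funext fun n => Subtype.ext ?_⟩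
    exact congrFun hy n

theorem IsDerivedComplete.quotient_of_fg (hX : IsDerivedComplete x X)
    (hA : IsDerivedComplete x A) {N : Submodule A X} (hN : N.FG) :
    IsDerivedComplete x (X ⧸ N) := by
  have := Module.Finite.iff_fg.mpr hN
  obtain ⟨n, f, hf⟩ := Module.Finite.exists_fin' A N
  exact hX.quotient (derivedCompletionPhi_surjective_of_surjective hf (hA.pi (ι := Fin n)).2)

theorem subsingleton_of_injective_of_forall_exists_eq_smul
    (hX : Function.Injective (derivedCompletionPhi x X)) (hdiv : ∀ m : X, ∃ m', m = x • m') :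
    Subsingleton X := by
  choose d hd using hdiv
  refine ⟨fun m m' => ?_⟩
  suffices ∀ m : X, m = 0 by rw [this m, this m']
  intro m
  have hs : (fun n => d^[n] m) = 0 := by
    apply hX
    rw [← coe_derivedCompletionPhiₗ, map_zero]
    funext n
    simp [derivedCompletionPhiₗ, Function.iterate_succ_apply', ← hd]
  exact congrFun hs 0

theorem subsingleton_of_top_le_smul_top {I : Ideal A} (hI : I.FG)
    (hX : ∀ x ∈ I, IsDerivedComplete x X) (h : (⊤ : Submodule A X) ≤ I • ⊤) :
    Subsingleton X := by
  classical
  obtain ⟨s, rfl⟩ := hI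
  induction s using Finset.induction_on generalizing X with
  | empty =>
    rw [Finset.coe_empty, Ideal.span_empty, Submodule.bot_smul, le_bot_iff] at h
    exact (Submodule.subsingleton_iff A).mp (subsingleton_of_top_eq_bot h)
  | insert t s _ ih =>
    set T := LinearMap.range (LinearMap.lsmul A X t)
    have hspan : Ideal.span ↑(insert t s) = Ideal.span {t} ⊔ Ideal.span ↑s := by
      rw [Finset.coe_insert, Ideal.span_insert]
    have hT : Subsingleton (X ⧸ T) := by
      refine ih (fun y hy => (hX y ?_).quotient ?_) ?_
      · exact hspan ▸ Ideal.mem_sup_right hy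
      · exact derivedCompletionPhi_surjective_of_surjective
          (LinearMap.surjective_rangeRestrict _) (hX y (hspan ▸ Ideal.mem_sup_right hy)).2
      · have hkill : Ideal.span {t} • (⊤ : Submodule A (X ⧸ T)) = ⊥ := by
          rw [Submodule.ideal_span_singleton_smul, eq_bot_iff]
          rintro _ ⟨q, -, rfl⟩
          obtain ⟨m, rfl⟩ := T.mkQ_surjective q
          simp [← Submodule.Quotient.mk_smul, T]
        have := Submodule.map_mono (f := T.mkQ) h
        rwa [Submodule.map_top, Submodule.range_mkQ,
          map_ideal_smul_top_of_surjective _ T.mkQ_surjective, hspan, Submodule.sup_smul, hkill,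
          bot_sup_eq] at this
    refine subsingleton_of_injective_of_forall_exists_eq_smul (hX t ?_).1 fun m => ?_
    · exact Ideal.subset_span (Finset.mem_insert_self t s)
    · obtain ⟨m', hm'⟩ : m ∈ T := by
        rw [← Submodule.Quotient.mk_eq_zero]
        exact Subsingleton.elim _ _
      exact ⟨m', hm'.symm⟩

theorem IsDerivedComplete.pow_smul_eq_zero_of_forall_exists (hX : IsDerivedComplete x X)
    {k : ℕ} (hk : ∀ m : X, ∃ u, x ^ k • m = x ^ (k + 1) • u) (m : X) : x ^ k • m = 0 := by
  set W := LinearMap.range (LinearMap.lsmul A X (x ^ k))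
  have hW : IsDerivedComplete x W := by
    refine hX.submodule (isDerivedComplete_of_pow_smul_eq_zero k fun q => ?_).1
    obtain ⟨m, rfl⟩ := W.mkQ_surjective q
    simp [← Submodule.Quotient.mk_smul, W]
  have : Subsingleton W := by
    refine subsingleton_of_injective_of_forall_exists_eq_smul hW.1 ?_
    rintro ⟨_, m, rfl⟩
    obtain ⟨u, hu⟩ := hk m
    refine ⟨⟨x ^ k • u, u, rfl⟩, Subtype.ext ?_⟩
    simp [hu, pow_succ', mul_smul]
  exact congrArg Subtype.val (Subsingleton.elim (⟨x ^ k • m, m, rfl⟩ : W) 0)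

/- `y 0 = ∑ x ^ c • (w c - v c (S c))`, where `v c` solves `x ^ c • S c = x ^ (2 * c) • v` for the
partial sum `S c` whenever possible. If `x ^ c • y 0 = 0`, it is possible, and then
`x ^ (2 * c) • w c = x ^ c • S (c + 1)` is divisible by `x ^ (2 * c + 1)`, contradicting the
choice of `w c`. -/
theorem exists_forall_pow_smul_ne_zero (hX : Function.Surjective (derivedCompletionPhi x X))
    (h : ∀ k, ∃ m : X, ∀ u, x ^ k • m ≠ x ^ (k + 1) • u) : ∃ y : X, ∀ c, x ^ c • y ≠ 0 := by
  choose w hw using fun c => h (2 * c)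
  let v : ℕ → X → X := fun c s => Classical.epsilon fun v => x ^ c • s = x ^ (2 * c) • v
  let S : ℕ → X := fun n => Nat.rec 0 (fun c s => s + x ^ c • (w c - v c s)) n
  obtain ⟨y, hy⟩ := hX fun c => w c - v c (S c)
  have hyS : ∀ n, y 0 = S n + x ^ n • y n := by
    intro n
    induction n with
    | zero => simp [S]
    | succ n ih =>
      have hn : y n - x • y (n + 1) = w n - v n (S n) := congrFun hy n
      have hSn : S (n + 1) = S n + x ^ n • (w n - v n (S n)) := rfl
      rw [ih, hSn, ← hn]
      module
  refine ⟨y 0, fun c hc => hw c (-y (c + 1)) ?_⟩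
  have hv : x ^ c • S c = x ^ (2 * c) • v c (S c) := by
    refine Classical.epsilon_spec (p := fun v => x ^ c • S c = x ^ (2 * c) • v)
      ⟨-y c, ?_⟩
    have := congrArg (x ^ c • ·) (hyS c)
    simp only [hc] at this
    linear_combination (norm := module) -this
  have hSc : S (c + 1) = S c + x ^ c • (w c - v c (S c)) := rfl
  have := congrArg (x ^ c • ·) (hyS (c + 1))
  simp only [hc, hSc] at this
  linear_combination (norm := module) -this - hv

theorem IsDerivedComplete.exists_pow_smul_eq_zero (hX : IsDerivedComplete x X)
    (htor : ∀ m : X, ∃ n, x ^ n • m = 0) : ∃ c, ∀ m : X, x ^ c • m = 0 := by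
  by_cases h : ∃ k, ∀ m : X, ∃ u, x ^ k • m = x ^ (k + 1) • u
  · obtain ⟨k, hk⟩ := h
    exact ⟨k, hX.pow_smul_eq_zero_of_forall_exists hk⟩
  · push Not at h
    obtain ⟨y, hy⟩ := exists_forall_pow_smul_ne_zero hX.2 h
    obtain ⟨n, hn⟩ := htor y
    exact absurd hn (hy n)

end DerivedComplete

section LeqFinitelyGenerated

variable {A : Type u} [CommRing A] {J : Ideal A} {X : Type v} [AddCommGroup X] [Module A X]

theorem isLeqFinitelyGenerated_iff :
    IsLeqFinitelyGenerated J X ↔ ∀ a ∈ J, ∃ N : Submodule A X, N.FG ∧ ∀ m, a • m ∈ N := by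
  refine ⟨fun h a ha => ?_, fun h a ha => ?_⟩
  · obtain ⟨F, _, _, _, f, g, hgf⟩ := h a ha
    refine ⟨LinearMap.range g, LinearMap.range_eq_map g ▸ Module.Finite.fg_top.map g,
      fun m => ⟨f m, ?_⟩⟩
    simpa using LinearMap.congr_fun hgf m
  · obtain ⟨N, hN, haN⟩ := h a ha
    have := Module.Finite.iff_fg.mpr hN
    exact ⟨N, _, _, this, LinearMap.codRestrict N (a • LinearMap.id) haN, N.subtype,
      by ext; simp⟩

theorem isLeqFinitelyGenerated_of_smul_top_le {N : Submodule A X} (hN : N.FG)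
    (h : J • ⊤ ≤ N) : IsLeqFinitelyGenerated J X :=
  isLeqFinitelyGenerated_iff.mpr fun _ ha =>
    ⟨N, hN, fun _ => h (Submodule.smul_mem_smul ha Submodule.mem_top)⟩

theorem IsLeqFinitelyGenerated.exists_fg_smul_top_le (hJ : J.FG)
    (h : IsLeqFinitelyGenerated J X) : ∃ N : Submodule A X, N.FG ∧ J • ⊤ ≤ N := by
  obtain ⟨s, rfl⟩ := hJ
  choose! N hN haN using fun a (ha : a ∈ s) =>
    isLeqFinitelyGenerated_iff.mp h a (Ideal.subset_span ha)
  refine ⟨⨆ a ∈ s, N a, Submodule.fg_biSup s N hN, Submodule.smul_le.mpr fun r hr m _ => ?_⟩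
  suffices Ideal.span ↑s ≤ (⨆ a ∈ s, N a).colon Set.univ from
    Submodule.mem_colon.mp (this hr) m trivial
  refine Ideal.span_le.mpr fun a ha => Submodule.mem_colon.mpr fun m _ => ?_
  exact (le_biSup N ha : N a ≤ _) (haN a ha m)

theorem IsLeqFinitelyGenerated.mono {J' : Ideal A} (h : IsLeqFinitelyGenerated J X)
    (hJ' : J' ≤ J) : IsLeqFinitelyGenerated J' X :=
  fun a ha => h a (hJ' ha)

theorem IsLeqFinitelyGenerated.of_surjective {Y : Type v} [AddCommGroup Y] [Module A Y]
    (h : IsLeqFinitelyGenerated J X) {f : X →ₗ[A] Y} (hf : Function.Surjective f) :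
    IsLeqFinitelyGenerated J Y := by
  refine isLeqFinitelyGenerated_iff.mpr fun a ha => ?_
  obtain ⟨N, hN, haN⟩ := isLeqFinitelyGenerated_iff.mp h a ha
  refine ⟨N.map f, hN.map f, fun y => ?_⟩
  obtain ⟨m, rfl⟩ := hf y
  exact ⟨a • m, haN m, map_smul f a m⟩

end LeqFinitelyGenerated

section Localization

variable {A : Type u} [CommRing A] {X : Type v} [AddCommGroup X] [Module A X]

theorem LocalizedModule.away_pow_smul_mem_iff {t : A}
    {P : Submodule (Localization.Away t) (LocalizedModule (Submonoid.powers t) X)}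
    {z : LocalizedModule (Submonoid.powers t) X} (n : ℕ) : t ^ n • z ∈ P ↔ z ∈ P := by
  have hunit := (IsLocalization.Away.algebraMap_isUnit (S := Localization.Away t) t).pow n
  rw [← algebraMap_smul (Localization.Away t) (t ^ n) z, map_pow]
  exact Submodule.smul_mem_iff_of_isUnit _ hunit

theorem finite_localizedModule_away_iff (t : A) :
    Module.Finite (Localization.Away t) (LocalizedModule (Submonoid.powers t) X) ↔
      ∃ N : Submodule A X, N.FG ∧ ∀ m, ∃ n : ℕ, t ^ n • m ∈ N := by
  classical
  set f := LocalizedModule.mkLinearMap (Submonoid.powers t) X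
  constructor
  · rintro ⟨G, hG⟩
    choose n x hx using IsLocalizedModule.Away.surj f t
    refine ⟨Submodule.span A (G.image x), ⟨_, rfl⟩, fun m => ?_⟩
    have hspan : f m ∈ Submodule.span (Localization.Away t) (f '' (G.image x : Set X)) := by
      refine (top_le_iff.mpr hG).trans (Submodule.span_le.mpr fun g hg => ?_) Submodule.mem_top
      refine (LocalizedModule.away_pow_smul_mem_iff (n g)).mp ?_
      rw [hx]
      exact Submodule.subset_span
        ⟨x g, Finset.mem_coe.mpr (Finset.mem_image_of_mem x hg), rfl⟩
    obtain ⟨⟨_, k, rfl⟩, hk⟩ :=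
      multiple_mem_span_of_mem_localization_span (Submonoid.powers t) _ _ _ hspan
    rw [← Submodule.map_span, Submonoid.smul_def, ← map_smul] at hk
    obtain ⟨N, hN, hNm⟩ := hk
    obtain ⟨j, hj⟩ := IsLocalizedModule.Away.exists_of_eq t hNm
    refine ⟨j + k, ?_⟩
    rw [pow_add, mul_smul, ← hj]
    exact Submodule.smul_mem _ _ hN
  · rintro ⟨N, hN, hNm⟩
    suffices N.localized' (Localization.Away t) (Submonoid.powers t) f = ⊤ from
      ⟨this ▸ Submodule.localized'_fg _ _ f hN⟩
    refine top_le_iff.mp fun z _ => ?_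
    obtain ⟨n, m, hm⟩ := IsLocalizedModule.Away.surj f t z
    obtain ⟨k, hk⟩ := hNm m
    refine (LocalizedModule.away_pow_smul_mem_iff (k + n)).mp ?_
    rw [pow_add, mul_smul, hm, ← map_smul]
    exact (Submodule.mem_localized' _ _ _ _ _).mpr
      ⟨_, hk, 1, IsLocalizedModule.mk'_one _ _ _⟩

theorem IsLeqFinitelyGenerated.finite_localizedModule_away {I : Ideal A} {r : ℕ}
    (h : IsLeqFinitelyGenerated (I ^ r) X) {t : A} (ht : t ∈ I) :
    Module.Finite (Localization.Away t) (LocalizedModule (Submonoid.powers t) X) := by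
  obtain ⟨N, hN, htN⟩ := isLeqFinitelyGenerated_iff.mp h (t ^ r) (Ideal.pow_mem_pow ht r)
  exact (finite_localizedModule_away_iff t).mpr ⟨N, hN, fun m => ⟨r, htN m⟩⟩

end Localization

section AdicNakayama

variable {A : Type u} [CommRing A] {I : Ideal A} {X : Type v} [AddCommGroup X] [Module A X]

theorem pow_smul_top_eq_bot_of_le (hI : I.FG) (hX : ∀ x ∈ I, IsDerivedComplete x X)
    {r : ℕ} (h : I ^ r • (⊤ : Submodule A X) ≤ I ^ (r + 1) • ⊤) :
    I ^ r • (⊤ : Submodule A X) = ⊥ := by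
  set W := I ^ r • (⊤ : Submodule A X)
  have hW : ∀ x ∈ I, IsDerivedComplete x W := fun x hx => by
    refine (hX x hx).submodule (isDerivedComplete_of_pow_smul_eq_zero r fun q => ?_).1
    obtain ⟨m, rfl⟩ := W.mkQ_surjective q
    rw [← map_smul, Submodule.mkQ_apply, Submodule.Quotient.mk_eq_zero]
    exact Submodule.smul_mem_smul (Ideal.pow_mem_pow hx r) Submodule.mem_top
  suffices Subsingleton W from Submodule.eq_bot_of_subsingleton
  refine subsingleton_of_top_le_smul_top hI hW fun w _ => ?_
  have : (w : X) ∈ (I • ⊤ : Submodule A W).map W.subtype := by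
    rw [Submodule.map_smul'', Submodule.map_subtype_top, ← Submodule.smul_assoc,
      Ideal.smul_eq_mul, ← pow_succ']
    exact h w.2
  obtain ⟨w', hw', hw'w⟩ := this
  exact Subtype.ext hw'w ▸ hw'

theorem exists_pow_smul_top_eq_bot_of_forall_pow_smul_eq_zero {s : Finset A}
    (hX : ∀ t ∈ s, IsDerivedComplete t X)
    (htor : ∀ t ∈ s, ∀ m : X, ∃ n, t ^ n • m = 0) :
    ∃ n, Ideal.span (s : Set A) ^ n • (⊤ : Submodule A X) = ⊥ := by
  have hrad : Ideal.span (s : Set A) ≤ (Module.annihilator A X).radical := by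
    refine Ideal.span_le.mpr fun t ht => ?_
    obtain ⟨c, hc⟩ := (hX t ht).exists_pow_smul_eq_zero (htor t ht)
    exact ⟨c, Module.mem_annihilator.mpr hc⟩
  obtain ⟨n, hn⟩ := Ideal.exists_pow_le_of_le_radical_of_fg hrad ⟨s, rfl⟩
  rw [← Submodule.annihilator_top] at hn
  exact ⟨n, Submodule.le_annihilator_iff.mp hn⟩

end AdicNakayama

section FinitelyGeneratedOutside

variable {A : Type u} [CommRing A] {I : Ideal A} {X : Type v} [AddCommGroup X] [Module A X]

theorem smul_top_le_of_le_sup_pow_succ_smul_top (hI : I.FG)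
    (hA : ∀ x ∈ I, IsDerivedComplete x A) (hX : ∀ x ∈ I, IsDerivedComplete x X)
    {N : Submodule A X} (hN : N.FG) {r : ℕ} (h : I ^ r • ⊤ ≤ N ⊔ I ^ (r + 1) • ⊤) :
    I ^ r • (⊤ : Submodule A X) ≤ N := by
  rw [smul_top_le_iff_smul_top_quotient_eq_bot]
  refine pow_smul_top_eq_bot_of_le hI (fun x hx => (hX x hx).quotient_of_fg (hA x hx) hN) ?_
  have := Submodule.map_mono (f := N.mkQ) h
  rwa [Submodule.map_sup, Submodule.mkQ_map_self, bot_sup_eq,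
    map_ideal_smul_top_of_surjective _ N.mkQ_surjective,
    map_ideal_smul_top_of_surjective _ N.mkQ_surjective] at this

theorem isLeqFinitelyGenerated_of_quotient_pow_succ (hI : I.FG)
    (hA : ∀ x ∈ I, IsDerivedComplete x A) (hX : ∀ x ∈ I, IsDerivedComplete x X) {r : ℕ}
    (h : IsLeqFinitelyGenerated (I ^ r) (X ⧸ I ^ (r + 1) • (⊤ : Submodule A X))) :
    IsLeqFinitelyGenerated (I ^ r) X := by
  set K := I ^ (r + 1) • (⊤ : Submodule A X)
  obtain ⟨P, hP, hrP⟩ := h.exists_fg_smul_top_le (Submodule.FG.pow hI r)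
  obtain ⟨N, hN, rfl⟩ := Submodule.exists_fg_map_eq_of_surjective K.mkQ_surjective hP
  rw [← map_ideal_smul_top_of_surjective _ K.mkQ_surjective, Submodule.map_le_iff_le_comap,
    Submodule.comap_map_mkQ, sup_comm] at hrP
  exact isLeqFinitelyGenerated_of_smul_top_le hN
    (smul_top_le_of_le_sup_pow_succ_smul_top hI hA hX hN hrP)

theorem exists_isLeqFinitelyGenerated_pow_of_finite_localizedModule (hI : I.FG)
    (hA : ∀ x ∈ I, IsDerivedComplete x A) (hX : ∀ x ∈ I, IsDerivedComplete x X)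
    (h : ∀ t ∈ I,
      Module.Finite (Localization.Away t) (LocalizedModule (Submonoid.powers t) X)) :
    ∃ r, 1 ≤ r ∧ IsLeqFinitelyGenerated (I ^ r) X := by
  obtain ⟨s, rfl⟩ := hI
  have hs : ∀ t ∈ s, t ∈ Ideal.span (s : Set A) := fun t ht => Ideal.subset_span ht
  choose! N hN hNm using fun t (ht : t ∈ s) =>
    (finite_localizedModule_away_iff t).mp (h t (hs t ht))
  set N' := ⨆ t ∈ s, N t
  have hN' : N'.FG := Submodule.fg_biSup s N hN
  obtain ⟨n, hn⟩ := exists_pow_smul_top_eq_bot_of_forall_pow_smul_eq_zero (X := X ⧸ N')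
    (fun t ht => (hX t (hs t ht)).quotient_of_fg (hA t (hs t ht)) hN') fun t ht q => by
      obtain ⟨m, rfl⟩ := N'.mkQ_surjective q
      obtain ⟨k, hk⟩ := hNm t ht m
      refine ⟨k, ?_⟩
      rw [← map_smul, Submodule.mkQ_apply, Submodule.Quotient.mk_eq_zero]
      exact (le_biSup N ht : N t ≤ N') hk
  rw [← smul_top_le_iff_smul_top_quotient_eq_bot] at hn
  exact ⟨n + 1, Nat.le_add_left 1 n, (isLeqFinitelyGenerated_of_smul_top_le hN' hn).mono
    (Ideal.pow_le_pow_right n.le_succ)⟩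

theorem isLeqFinitelyGenerated_pow_iff_forall_quotient (hI : I.FG)
    (hA : ∀ x ∈ I, IsDerivedComplete x A) (hX : ∀ x ∈ I, IsDerivedComplete x X) (r : ℕ) :
    IsLeqFinitelyGenerated (I ^ r) X ↔
      ∀ n : ℕ, 1 ≤ n → IsLeqFinitelyGenerated (I ^ r) (X ⧸ I ^ n • (⊤ : Submodule A X)) :=
  ⟨fun h _ _ => h.of_surjective (Submodule.mkQ_surjective _),
    fun h => isLeqFinitelyGenerated_of_quotient_pow_succ hI hA hX (h (r + 1) (Nat.le_add_left 1 r))⟩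

end FinitelyGeneratedOutside

/-- Proposition 2.26: over a derived `I`-complete ring `A` (with `I` finitely generated), for a
derived `I`-complete module `M` the conditions (1) `M` is finitely generated outside `I`;
(2) `M` is `≤I^r`-finitely generated for some `r ≥ 1`; (3) `M/I^n M` is `≤I^r`-finitely
generated for some `r ≥ 1` and all `n ≥ 1`, are equivalent; moreover, for each fixed `r ≥ 1`,
(2) holds with exponent `r` if and only if (3) holds with exponent `r`. -/
theorem stmt2 {A : Type u} [CommRing A] (I : Ideal A) (hI : I.FG)
    (hA : ∀ x ∈ I, IsDerivedComplete x A)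
    (M : Type u) [AddCommGroup M] [Module A M]
    (hM : ∀ x ∈ I, IsDerivedComplete x M) :
    (List.TFAE
      [ ∀ t ∈ I, Module.Finite (Localization.Away t)
          (LocalizedModule (Submonoid.powers t) M),
        ∃ r : ℕ, 1 ≤ r ∧ IsLeqFinitelyGenerated (I ^ r) M,
        ∃ r : ℕ, 1 ≤ r ∧ ∀ n : ℕ, 1 ≤ n →
          IsLeqFinitelyGenerated (I ^ r) (M ⧸ (I ^ n • (⊤ : Submodule A M))) ]) ∧
    (∀ r : ℕ, 1 ≤ r →
      (IsLeqFinitelyGenerated (I ^ r) M ↔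
        ∀ n : ℕ, 1 ≤ n →
          IsLeqFinitelyGenerated (I ^ r) (M ⧸ (I ^ n • (⊤ : Submodule A M))))) := by
  have two_iff_three := isLeqFinitelyGenerated_pow_iff_forall_quotient hI hA hM
  refine ⟨?_, fun r _ => two_iff_three r⟩
  tfae_have 1 → 2 := exists_isLeqFinitelyGenerated_pow_of_finite_localizedModule hI hA hM
  tfae_have 2 → 1 := fun ⟨_, _, h⟩ _ ht => h.finite_localizedModule_away ht
  tfae_have 2 ↔ 3 := exists_congr fun r => and_congr_right fun _ => two_iff_three r
  tfae_finish
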